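/- arXiv:1810.09024 — 11 statements merged into one kernel-verified Lean document; each statement's English description precedes it below -/
import Mathlib

section
/- For every n ≥ 1 there exist k ∈ ℕ and a quantifier-free formula φ in the first-order language of rings with free variables indexed by Fin 1 ⊕ Fin k (a bounded formula with 1 free variable and k extra variables), such that for every field F and every matrix A ∈ M_n(F): A lies in the center of the ring M_n(F) if and only if the existential formula ∃ y₁ … y_k φ(x, y₁, …, y_k) holds at A in the ring M_n(F). In particular, the center of M_n(F) is existentially definable without parameters in the language of rings, uniformly in F. -/
/-!
A matrix `A ∈ M_n(F)` is central iff it commutes with some system of matrix units `e i j`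
(`e i j * e k l = δ j k • e i l`, `∑ i, e i i = 1`). The standard units `Matrix.single i j 1`
give one direction. Conversely, sandwiching `∑ c i j • e i j` between `e k i` and `e j l`
isolates `c i j • e k l`, so any system of matrix units in `M_n(F)` is linearly independent,
hence a basis by counting dimensions, and `A` commutes with everything. The defining conditions
are finitely many ring equations in `A` and the `n²` unknowns `e i j`.
-/

open FirstOrder FirstOrder.Language FirstOrder.Ring

section MatrixUnits

variable {ι R : Type*} [Fintype ι] [DecidableEq ι]

def IsMatrixUnitSystem [Semiring R] (e : ι → ι → R) : Prop :=
  (∀ i j k l, e i j * e k l = if j = k then e i l else 0) ∧ ∑ i, e i i = 1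

theorem isMatrixUnitSystem_single [Semiring R] :
    IsMatrixUnitSystem fun i j : ι => Matrix.single i j (1 : R) := by
  refine ⟨fun i j k l => ?_, Matrix.sum_single_one⟩
  split_ifs with hjk
  · subst hjk
    rw [Matrix.single_mul_single_same, mul_one]
  · exact Matrix.single_mul_single_of_ne _ _ _ _ hjk _

namespace IsMatrixUnitSystem

section Semiring

variable [Semiring R] {e : ι → ι → R}

theorem mul_mul (he : IsMatrixUnitSystem e) (i j a b k l : ι) :
    e k i * e a b * e j l = if (a, b) = (i, j) then e k l else 0 := by
  rcases eq_or_ne i a with rfl | hia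
  · rcases eq_or_ne b j with rfl | hbj
    · simp [he.1]
    · simp [he.1, hbj]
  · simp [he.1, hia, hia.symm]

theorem exists_diag_ne_zero [Nontrivial R] (he : IsMatrixUnitSystem e) : ∃ i, e i i ≠ 0 := by
  by_contra! h
  exact one_ne_zero (he.2.symm.trans (Finset.sum_eq_zero fun i _ => h i))

end Semiring

variable {F : Type*} [Field F] [Ring R] [Algebra F R] {e : ι → ι → R}

theorem mul_sum_smul_mul (he : IsMatrixUnitSystem e) (c : ι × ι → F) (i j k l : ι) :
    e k i * (∑ p : ι × ι, c p • e p.1 p.2) * e j l = c (i, j) • e k l := by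
  simp only [Finset.mul_sum, Finset.sum_mul, mul_smul_comm, smul_mul_assoc, he.mul_mul,
    Prod.mk.eta, smul_ite, smul_zero, Finset.sum_ite_eq', Finset.mem_univ, if_true]

theorem linearIndependent [Nontrivial R] (he : IsMatrixUnitSystem e) :
    LinearIndependent F fun p : ι × ι => e p.1 p.2 := by
  obtain ⟨k, hk⟩ := he.exists_diag_ne_zero
  rw [Fintype.linearIndependent_iff]
  intro c hc ⟨i, j⟩
  have hsandwich := he.mul_sum_smul_mul c i j k k
  rw [hc, mul_zero, zero_mul, eq_comm, smul_eq_zero] at hsandwich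
  exact hsandwich.resolve_right hk

end IsMatrixUnitSystem

variable {F : Type*} [Field F]

theorem IsMatrixUnitSystem.span_eq_top {e : ι → ι → Matrix ι ι F}
    (he : IsMatrixUnitSystem e) :
    Submodule.span F (Set.range fun p : ι × ι => e p.1 p.2) = ⊤ := by
  cases isEmpty_or_nonempty ι
  · exact Subsingleton.elim _ _
  refine he.linearIndependent.span_eq_top_of_card_eq_finrank' ?_
  rw [Module.finrank_matrix, Module.finrank_self, mul_one, Fintype.card_prod]

theorem mem_center_iff_exists_isMatrixUnitSystem_commute (A : Matrix ι ι F) :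
    A ∈ Set.center (Matrix ι ι F) ↔
      ∃ e : ι → ι → Matrix ι ι F, IsMatrixUnitSystem e ∧ ∀ i j, Commute A (e i j) := by
  rw [Semigroup.mem_center_iff]
  constructor
  · exact fun hA => ⟨_, isMatrixUnitSystem_single, fun i j => (hA _).symm⟩
  · rintro ⟨e, he, hAe⟩ B
    have hB : B ∈ Submodule.span F (Set.range fun p : ι × ι => e p.1 p.2) :=
      he.span_eq_top ▸ Submodule.mem_top
    induction hB using Submodule.span_induction with
    | mem _ hx => obtain ⟨p, rfl⟩ := hx; exact (hAe p.1 p.2).eq.symm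
    | zero => simp
    | add _ _ _ _ h₁ h₂ => rw [add_mul, mul_add, h₁, h₂]
    | smul c _ _ h => rw [smul_mul_assoc, mul_smul_comm, h]

end MatrixUnits

namespace FirstOrder.Language.BoundedFormula

variable {L : Language} {α : Type*} {n : ℕ}

theorem IsQF.foldr_inf {l : List (L.BoundedFormula α n)} (h : ∀ φ ∈ l, φ.IsQF) :
    (l.foldr (· ⊓ ·) ⊤).IsQF := by
  induction l with
  | nil => exact IsQF.top
  | cons φ l ih =>
    exact (h φ List.mem_cons_self).inf (ih fun ψ hψ => h ψ (List.mem_cons_of_mem _ hψ))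

theorem IsQF.iInf {β : Type*} [Finite β] {f : β → L.BoundedFormula α n}
    (h : ∀ b, (f b).IsQF) : (iInf f).IsQF :=
  IsQF.foldr_inf fun _ hφ => by
    obtain ⟨b, -, rfl⟩ := List.mem_map.1 hφ
    exact h b

end FirstOrder.Language.BoundedFormula

namespace FirstOrder.Ring

variable {α β : Type*}

theorem realize_foldr_add {R : Type*} [Ring R] [CompatibleRing R]
    (l : List (Language.ring.Term α)) (v : α → R) :
    (l.foldr (· + ·) 0).realize v = (l.map (Term.realize v)).sum := by
  induction l with
  | nil => simp
  | cons t l ih => simp [ih]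

noncomputable def sumTerm [Fintype β] (t : β → Language.ring.Term α) : Language.ring.Term α :=
  ((Finset.univ : Finset β).toList.map t).foldr (· + ·) 0

@[simp]
theorem realize_sumTerm {R : Type*} [Ring R] [CompatibleRing R] [Fintype β]
    (t : β → Language.ring.Term α) (v : α → R) :
    (sumTerm t).realize v = ∑ b, (t b).realize v := by
  rw [sumTerm, realize_foldr_add, List.map_map, Finset.sum_map_toList]
  rfl

end FirstOrder.Ring

section Definability

open Term

variable (ι : Type*) [Fintype ι] [DecidableEq ι]

noncomputable def commutesWithMatrixUnitsFormula : Language.ring.Formula (Fin 1 ⊕ ι × ι) :=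
  let x : Language.ring.Term (Fin 1 ⊕ ι × ι) := var (Sum.inl 0)
  let e (i j : ι) : Language.ring.Term (Fin 1 ⊕ ι × ι) := var (Sum.inr (i, j))
  (Formula.iInf fun i => Formula.iInf fun j => Formula.iInf fun k => Formula.iInf fun l =>
      (e i j * e k l).equal (if j = k then e i l else 0)) ⊓
    (sumTerm fun i => e i i).equal 1 ⊓
    Formula.iInf fun i => Formula.iInf fun j => (x * e i j).equal (e i j * x)

theorem isQF_commutesWithMatrixUnitsFormula : (commutesWithMatrixUnitsFormula ι).IsQF :=
  have hEq {t₁ t₂ : Language.ring.Term (Fin 1 ⊕ ι × ι)} : (t₁.equal t₂).IsQF :=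
    (BoundedFormula.IsAtomic.equal _ _).isQF
  .inf (.inf (.iInf fun _ => .iInf fun _ => .iInf fun _ => .iInf fun _ => hEq) hEq)
    (.iInf fun _ => .iInf fun _ => hEq)

variable {ι}

theorem realize_commutesWithMatrixUnitsFormula {R : Type*} [Ring R] [CompatibleRing R] (a : R)
    (e : ι × ι → R) :
    (commutesWithMatrixUnitsFormula ι).Realize (Sum.elim (fun _ => a) e) ↔
      IsMatrixUnitSystem (Function.curry e) ∧ ∀ i j, Commute a (e (i, j)) := by
  simp [commutesWithMatrixUnitsFormula, IsMatrixUnitSystem, commute_iff_eq, and_assoc,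
    apply_ite (Term.realize (Sum.elim (fun _ => a) e))]

end Definability

theorem center_existentially_definable_general (n : ℕ) :
    ∃ (k : ℕ) (φ : Language.ring.Formula (Fin 1 ⊕ Fin k)),
      FirstOrder.Language.BoundedFormula.IsQF φ ∧
      ∀ (F : Type) [Field F],
        ∀ A : Matrix (Fin n) (Fin n) F,
          letI := compatibleRingOfRing (Matrix (Fin n) (Fin n) F)
          (A ∈ Set.center (Matrix (Fin n) (Fin n) F) ↔
            ∃ y : Fin k → Matrix (Fin n) (Fin n) F,
              φ.Realize (Sum.elim (fun _ => A) y)) := by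
  refine ⟨n * n, (commutesWithMatrixUnitsFormula (Fin n)).relabel (Sum.map id finProdFinEquiv),
    (isQF_commutesWithMatrixUnitsFormula _).relabel _, fun F _ A => ?_⟩
  let := compatibleRingOfRing (Matrix (Fin n) (Fin n) F)
  simp only [mem_center_iff_exists_isMatrixUnitSystem_commute, Formula.realize_relabel,
    Sum.elim_comp_map, Function.comp_id, realize_commutesWithMatrixUnitsFormula]
  exact ((Equiv.curry _ _ _).symm.trans (finProdFinEquiv.arrowCongr (.refl _))).exists_congr_left

/-- For every `n ≥ 1` there are `k : ℕ` and a quantifier-free formula `φ` in the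
language of rings with free variables indexed by `Fin 1 ⊕ Fin k` such that for
every field `F` and every `A ∈ M_n(F)`: `A` is in the center of `M_n(F)` iff
`∃ y₁ … y_k, φ(A, y₁, …, y_k)` holds in the ring `M_n(F)`.  I.e. the center of
`M_n(F)` is existentially definable without parameters, uniformly in `F`. -/
theorem center_existentially_definable (n : ℕ) (hn : 0 < n) :
    ∃ (k : ℕ) (φ : Language.ring.Formula (Fin 1 ⊕ Fin k)),
      FirstOrder.Language.BoundedFormula.IsQF φ ∧
      ∀ (F : Type) [Field F],
        ∀ A : Matrix (Fin n) (Fin n) F,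
          letI := compatibleRingOfRing (Matrix (Fin n) (Fin n) F)
          (A ∈ Set.center (Matrix (Fin n) (Fin n) F) ↔
            ∃ y : Fin k → Matrix (Fin n) (Fin n) F,
              φ.Realize (Sum.elim (fun _ => A) y)) :=
  center_existentially_definable_general n
end

section
/- Let F be an infinite field and n ≥ 2. Then the set F·I_n of scalar matrices in M_n(F) is not a finite union of sets of the form {X ∈ M_n(F) : p₁(X) = … = p_r(X) = 0 and q₁(X) ≠ 0, …, q_s(X) ≠ 0}, where the p_i and q_j are univariate polynomials with coefficients in F, evaluated at the matrix X. (Hence the center of M_n(F) is not quantifier-free definable in the ring M_n(F) with parameters from F·I_n.) -/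
/-!
Every scalar `c • 1` lies in one of the finitely many pieces, so by pigeonhole a single piece
contains infinitely many of them. The polynomials `pⱼ` defining that piece then have infinitely
many roots and vanish identically, while each `qⱼ` is nonzero at some such `c`. A polynomial
`q` with `q(c) ≠ 0` is coprime to `(X - c)ᵏ`, so `q(x) ≠ 0` whenever `x - c` is nilpotent;
hence the piece also contains the non-scalar matrix `c • 1 + E₀₁`.
-/

open Polynomial

section Locus

variable {F A : Type*} [Field F] [Ring A] [Algebra F A]

variable (A) in
def aevalLocus {ι κ : Type*} (p : ι → F[X]) (q : κ → F[X]) :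
    Set A :=
  {x | (∀ j, aeval x (p j) = 0) ∧ ∀ j, aeval x (q j) ≠ 0}

variable [Nontrivial A]

theorem aeval_algebraMap_eq_zero_iff (c : F) (p : F[X]) :
    aeval (algebraMap F A c) p = 0 ↔ p.eval c = 0 := by
  rw [aeval_algebraMap_apply_eq_algebraMap_eval, map_eq_zero_iff _ (algebraMap F A).injective]

theorem eq_zero_of_infinite_aeval_algebraMap_eq_zero {p : F[X]}
    (h : {c : F | aeval (algebraMap F A c) p = 0}.Infinite) : p = 0 :=
  p.eq_zero_of_infinite_isRoot <| h.mono fun c ↦ (aeval_algebraMap_eq_zero_iff c p).mp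

theorem aeval_ne_zero_of_isNilpotent_sub {x : A} {c : F} {q : F[X]}
    (hx : IsNilpotent (x - algebraMap F A c)) (hq : q.eval c ≠ 0) : aeval x q ≠ 0 := by
  obtain ⟨k, hk⟩ := hx
  have hcop : IsCoprime ((X - C c) ^ k) q :=
    ((irreducible_X_sub_C c).coprime_iff_not_dvd.mpr (by rwa [dvd_iff_isRoot])).pow_left
  obtain ⟨a, b, hab⟩ := hcop
  intro hxq
  have := congrArg (aeval x) hab
  simp only [map_add, map_mul, map_pow, map_sub, aeval_X, aeval_C, hk, hxq, mul_zero,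
    add_zero, map_one] at this
  exact zero_ne_one this

theorem mem_aevalLocus_of_isNilpotent_sub {ι κ : Type*} {p : ι → F[X]} {q : κ → F[X]} {x : A}
    {c : F} (hp : ∀ j, p j = 0) (hc : algebraMap F A c ∈ aevalLocus A p q)
    (hx : IsNilpotent (x - algebraMap F A c)) : x ∈ aevalLocus A p q :=
  ⟨fun j ↦ by rw [hp j, map_zero], fun j ↦
    aeval_ne_zero_of_isNilpotent_sub hx ((aeval_algebraMap_eq_zero_iff c (q j)).not.mp (hc.2 j))⟩

theorem exists_algebraMap_add_mem_iUnion_aevalLocus [Infinite F] {ι : Type*} [Finite ι]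
    {κ τ : ι → Type*} (p : ∀ i, κ i → F[X]) (q : ∀ i, τ i → F[X])
    (hU : ∀ c : F, algebraMap F A c ∈ ⋃ i, aevalLocus A (p i) (q i)) {N : A}
    (hN : IsNilpotent N) : ∃ c : F, algebraMap F A c + N ∈ ⋃ i, aevalLocus A (p i) (q i) := by
  choose f hf using fun c ↦ Set.mem_iUnion.mp (hU c)
  obtain ⟨i, hi⟩ := Finite.exists_infinite_fiber f
  have hfib : (f ⁻¹' {i}).Infinite := Set.infinite_coe_iff.mp hi
  have hmem (c : F) (hc : c ∈ f ⁻¹' {i}) : algebraMap F A c ∈ aevalLocus A (p i) (q i) :=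
    (Set.mem_singleton_iff.mp hc) ▸ hf c
  have hp (j : κ i) : p i j = 0 :=
    eq_zero_of_infinite_aeval_algebraMap_eq_zero <| hfib.mono fun c hc ↦ (hmem c hc).1 j
  obtain ⟨c, hc⟩ := hfib.nonempty
  exact ⟨c, Set.mem_iUnion.mpr ⟨i, mem_aevalLocus_of_isNilpotent_sub hp (hmem c hc)
    (by rwa [add_sub_cancel_left])⟩⟩

end Locus

theorem Matrix.isNilpotent_single_of_ne {n R : Type*} [Fintype n] [DecidableEq n] [Semiring R]
    {i j : n} (hij : i ≠ j) (a : R) : IsNilpotent (Matrix.single i j a) :=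
  ⟨2, by simp [sq, hij.symm]⟩

theorem Matrix.algebraMap_add_single_ne_smul_one {n R : Type*} [Fintype n] [DecidableEq n]
    [CommSemiring R] [Nontrivial R] {i j : n} (hij : i ≠ j) (c d : R) :
    algebraMap R (Matrix n n R) c + Matrix.single i j 1 ≠ d • 1 := by
  intro h
  have := congrFun (congrFun h i) j
  simp [Matrix.algebraMap_matrix_apply, Matrix.one_apply_ne hij, hij] at this

/-- For an infinite field `F` and `n ≥ 2`, the set `F·I_n` of scalar matrices in
`M_n(F)` is not a finite union of sets of the form
`{X | p₁(X) = … = p_r(X) = 0 ∧ q₁(X) ≠ 0 ∧ … ∧ q_s(X) ≠ 0}` with the `pᵢ, qⱼ`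
univariate polynomials over `F` evaluated at `X`. -/
theorem center_not_qf_definable
    (F : Type*) [Field F] [Infinite F] (n : ℕ) (hn : 2 ≤ n) :
    ¬ ∃ (k : ℕ) (r s : Fin k → ℕ)
        (p : (i : Fin k) → Fin (r i) → Polynomial F)
        (q : (i : Fin k) → Fin (s i) → Polynomial F),
      {X : Matrix (Fin n) (Fin n) F | ∃ c : F, X = c • (1 : Matrix (Fin n) (Fin n) F)} =
        ⋃ i : Fin k,
          {X : Matrix (Fin n) (Fin n) F |
            (∀ j, Polynomial.aeval X (p i j) = 0) ∧ ∀ j, Polynomial.aeval X (q i j) ≠ 0} := by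
  rintro ⟨k, r, s, p, q, hset⟩
  have : Nonempty (Fin n) := ⟨⟨0, by omega⟩⟩
  have h01 : (⟨0, by omega⟩ : Fin n) ≠ ⟨1, by omega⟩ := by simp
  have hscalar (c : F) : algebraMap F (Matrix (Fin n) (Fin n) F) c ∈
      ⋃ i, aevalLocus (Matrix (Fin n) (Fin n) F) (p i) (q i) :=
    hset ▸ ⟨c, Algebra.algebraMap_eq_smul_one c⟩
  obtain ⟨c, hc⟩ := exists_algebraMap_add_mem_iUnion_aevalLocus p q hscalar
    (Matrix.isNilpotent_single_of_ne h01 (1 : F))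
  obtain ⟨d, hd⟩ : _ ∈ {X : Matrix (Fin n) (Fin n) F | ∃ d : F, X = d • 1} := hset ▸ hc
  exact Matrix.algebraMap_add_single_ne_smul_one h01 c d hd
end

section
/- Let K, L, Ω be fields, let U be a ring equipped with a function f : U → U, and let φ : U → M_n(K) and ψ : U → M_n(L) be injective ring homomorphisms such that φ(f(X)) = tr(φ(X))·I_n for all X ∈ U and ψ(f(X)) = tr(ψ(X))·I_n for all X ∈ U. Then: (1) the subring R of U generated by the image of f is commutative, φ(R) ⊆ K·I_n and ψ(R) ⊆ L·I_n; and (2) if ε : K → Ω and δ : L → Ω are ring homomorphisms such that applying ε entrywise to φ(r) gives the same matrix in M_n(Ω) as applying δ entrywise to ψ(r), for every r ∈ R, then for every X ∈ U one has tr of the entrywise image under ε of φ(X) equals tr of the entrywise image under δ of ψ(X). -/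
/-!
Every generator `f X` of `R` is sent by `φ` to the scalar matrix `tr (φ X) • 1`, and scalar
matrices form a subring, so `φ(R)` consists of scalars; as scalars commute and `φ` is injective,
`R` is commutative. For the trace identity, apply the compatibility hypothesis to the generator
`f X`: it says `ε (tr φX) • 1 = δ (tr ψX) • 1`, and a scalar matrix determines its scalar unless
the matrices are `0 × 0`, where both traces vanish.
-/

namespace Matrix

variable {m K Ω : Type*} [Fintype m] [DecidableEq m]

theorem smul_one_eq_scalar [Semiring K] (c : K) : c • (1 : Matrix m m K) = scalar m c :=
  smul_one_eq_diagonal c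

theorem mapMatrix_smul_one [Semiring K] [Semiring Ω] (ε : K →+* Ω) (c : K) :
    ε.mapMatrix (c • (1 : Matrix m m K)) = ε c • (1 : Matrix m m Ω) := by
  simp only [smul_one_eq_scalar, RingHom.mapMatrix_apply, scalar_apply, diagonal_map (map_zero ε)]

theorem trace_mapMatrix [Semiring K] [Semiring Ω] (ε : K →+* Ω) (A : Matrix m m K) :
    trace (ε.mapMatrix A) = ε (trace A) :=
  (AddMonoidHom.map_trace ε A).symm

end Matrix

section ScalarImage

open Matrix

variable {R K : Type*} [Ring R] [CommRing K] {m : Type*} [Fintype m] [DecidableEq m]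
  (φ : R →+* Matrix m m K)

theorem exists_map_eq_smul_one_of_mem_closure {s : Set R}
    (hs : ∀ x ∈ s, ∃ c : K, φ x = c • (1 : Matrix m m K)) {r : R} (hr : r ∈ Subring.closure s) :
    ∃ c : K, φ r = c • (1 : Matrix m m K) := by
  have hle : Subring.closure s ≤ (scalar m).range.comap φ := by
    refine Subring.closure_le.mpr fun x hx => ?_
    obtain ⟨c, hc⟩ := hs x hx
    exact ⟨c, by rw [hc, smul_one_eq_scalar]⟩
  obtain ⟨c, hc⟩ := hle hr
  exact ⟨c, by rw [← hc, smul_one_eq_scalar]⟩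

variable {φ}

theorem commute_of_map_eq_smul_one (hφ : Function.Injective φ) {x y : R} {c d : K}
    (hx : φ x = c • (1 : Matrix m m K)) (hy : φ y = d • (1 : Matrix m m K)) : Commute x y :=
  hφ <| by rw [map_mul, map_mul, hx, hy, smul_mul_smul_comm, smul_mul_smul_comm, mul_comm c d]

end ScalarImage

theorem Matrix.trace_mapMatrix_eq_of_mapMatrix_trace_smul_one_eq {m K L Ω : Type*} [Fintype m]
    [DecidableEq m] [Semiring K] [Semiring L] [Semiring Ω] (ε : K →+* Ω) (δ : L →+* Ω)
    {A : Matrix m m K} {B : Matrix m m L}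
    (h : ε.mapMatrix (trace A • (1 : Matrix m m K)) = δ.mapMatrix (trace B • (1 : Matrix m m L))) :
    trace (ε.mapMatrix A) = trace (δ.mapMatrix B) := by
  cases isEmpty_or_nonempty m
  · simp [trace]
  · rw [mapMatrix_smul_one, mapMatrix_smul_one, smul_one_eq_scalar, smul_one_eq_scalar,
      scalar_inj] at h
    rw [trace_mapMatrix, trace_mapMatrix, h]

theorem amalgamation_of_traces_general
    (K L Ω U : Type*) [Field K] [Field L] [Field Ω] [Ring U] (n : ℕ)
    (f : U → U)
    (φ : U →+* Matrix (Fin n) (Fin n) K) (hφinj : Function.Injective φ)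
    (ψ : U →+* Matrix (Fin n) (Fin n) L)
    (hφ : ∀ X : U, φ (f X) = Matrix.trace (φ X) • (1 : Matrix (Fin n) (Fin n) K))
    (hψ : ∀ X : U, ψ (f X) = Matrix.trace (ψ X) • (1 : Matrix (Fin n) (Fin n) L)) :
    (∀ x ∈ Subring.closure (Set.range f), ∀ y ∈ Subring.closure (Set.range f), x * y = y * x) ∧
    (∀ r ∈ Subring.closure (Set.range f),
      ∃ c : K, φ r = c • (1 : Matrix (Fin n) (Fin n) K)) ∧
    (∀ r ∈ Subring.closure (Set.range f),
      ∃ c : L, ψ r = c • (1 : Matrix (Fin n) (Fin n) L)) ∧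
    (∀ (ε : K →+* Ω) (δ : L →+* Ω),
      (∀ r ∈ Subring.closure (Set.range f), ε.mapMatrix (φ r) = δ.mapMatrix (ψ r)) →
      ∀ X : U, Matrix.trace (ε.mapMatrix (φ X)) = Matrix.trace (δ.mapMatrix (ψ X))) := by
  have hφR : ∀ r ∈ Subring.closure (Set.range f), ∃ c : K, φ r = c • 1 :=
    fun r => exists_map_eq_smul_one_of_mem_closure φ (by rintro _ ⟨X, rfl⟩; exact ⟨_, hφ X⟩)
  have hψR : ∀ r ∈ Subring.closure (Set.range f), ∃ c : L, ψ r = c • 1 :=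
    fun r => exists_map_eq_smul_one_of_mem_closure ψ (by rintro _ ⟨X, rfl⟩; exact ⟨_, hψ X⟩)
  refine ⟨fun x hx y hy => ?_, hφR, hψR, fun ε δ hεδ X => ?_⟩
  · obtain ⟨c, hc⟩ := hφR x hx
    obtain ⟨d, hd⟩ := hφR y hy
    exact (commute_of_map_eq_smul_one hφinj hc hd).eq
  · have hfX := hεδ (f X) (Subring.subset_closure ⟨X, rfl⟩)
    rw [hφ X, hψ X] at hfX
    exact Matrix.trace_mapMatrix_eq_of_mapMatrix_trace_smul_one_eq ε δ hfX

/-- Amalgamation of traces: let `K, L, Ω` be fields, `U` a ring with a function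
`f : U → U`, and `φ : U → M_n(K)`, `ψ : U → M_n(L)` injective ring homomorphisms
with `φ (f X) = tr(φ X)·I` and `ψ (f X) = tr(ψ X)·I` for all `X`.  Then the
subring `R` generated by the image of `f` is commutative, `φ(R) ⊆ K·I` and
`ψ(R) ⊆ L·I`; and if `ε : K → Ω`, `δ : L → Ω` are ring homomorphisms with
`ε(φ r) = δ(ψ r)` (entrywise) for all `r ∈ R`, then
`tr(ε(φ X)) = tr(δ(ψ X))` for every `X ∈ U`. -/
theorem amalgamation_of_traces
    (K L Ω U : Type*) [Field K] [Field L] [Field Ω] [Ring U] (n : ℕ)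
    (f : U → U)
    (φ : U →+* Matrix (Fin n) (Fin n) K) (hφinj : Function.Injective φ)
    (ψ : U →+* Matrix (Fin n) (Fin n) L) (hψinj : Function.Injective ψ)
    (hφ : ∀ X : U, φ (f X) = Matrix.trace (φ X) • (1 : Matrix (Fin n) (Fin n) K))
    (hψ : ∀ X : U, ψ (f X) = Matrix.trace (ψ X) • (1 : Matrix (Fin n) (Fin n) L)) :
    (∀ x ∈ Subring.closure (Set.range f), ∀ y ∈ Subring.closure (Set.range f), x * y = y * x) ∧
    (∀ r ∈ Subring.closure (Set.range f),
      ∃ c : K, φ r = c • (1 : Matrix (Fin n) (Fin n) K)) ∧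
    (∀ r ∈ Subring.closure (Set.range f),
      ∃ c : L, ψ r = c • (1 : Matrix (Fin n) (Fin n) L)) ∧
    (∀ (ε : K →+* Ω) (δ : L →+* Ω),
      (∀ r ∈ Subring.closure (Set.range f), ε.mapMatrix (φ r) = δ.mapMatrix (ψ r)) →
      ∀ X : U, Matrix.trace (ε.mapMatrix (φ X)) = Matrix.trace (δ.mapMatrix (ψ X))) :=
  amalgamation_of_traces_general K L Ω U n f φ hφinj ψ hφ hψ
end

section
/- Let F be a formally real field and let X₁,…,X_d, Y₁,…,Y_d ∈ M_n(F) satisfy tr(w(X₁,…,X_d,X₁ᵀ,…,X_dᵀ)) = tr(w(Y₁,…,Y_d,Y₁ᵀ,…,Y_dᵀ)) for every word w in the 2d letters x₁,…,x_d,x₁ᵗ,…,x_dᵗ. Then for every element p of the free associative F-algebra on 2d generators: if the evaluation of p at (X₁,…,X_d,X₁ᵀ,…,X_dᵀ) is the zero matrix, then the evaluation of p at (Y₁,…,Y_d,Y₁ᵀ,…,Y_dᵀ) is also the zero matrix. -/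
/-!
Let `p*` be `p` with every word reversed and each letter `xᵢ` exchanged with `xᵢᵗ`, so that
`p*(Z, Zᵀ) = p(Z, Zᵀ)ᵀ`. The trace of a polynomial evaluation is a linear combination of traces
of words, so `tr (p p*)(Y, Yᵀ) = tr (p p*)(X, Xᵀ) = 0`. With `M = p(Y, Yᵀ)` the left side is
`tr (M Mᵀ) = ∑ Mᵢⱼ²`, hence `M = 0` because `F` is formally real.
-/

open Matrix

namespace FreeAlgebra

variable {R X A : Type*} [CommSemiring R] [Semiring A] [Algebra R A]

theorem lift_freeMonoidLift_ι (f : X → A) (w : FreeMonoid X) :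
    lift R f (FreeMonoid.lift (ι R) w) = FreeMonoid.lift f w := by
  induction w using FreeMonoid.inductionOn' with
  | one => simp
  | of_mul x w ih => simp [ih]

theorem basisFreeMonoid_apply (w : FreeMonoid X) :
    basisFreeMonoid R X w = FreeMonoid.lift (ι R) w := by
  simp [basisFreeMonoid, equivMonoidAlgebraFreeMonoid]

theorem linearMap_comp_lift_eq_of_forall_freeMonoidLift {M : Type*} [AddCommMonoid M]
    [Module R M] (τ : A →ₗ[R] M) {f g : X → A}
    (h : ∀ w : FreeMonoid X, τ (FreeMonoid.lift f w) = τ (FreeMonoid.lift g w)) :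
    τ ∘ₗ (lift R f).toLinearMap = τ ∘ₗ (lift R g).toLinearMap :=
  (basisFreeMonoid R X).ext fun w => by
    simpa [basisFreeMonoid_apply, lift_freeMonoidLift_ι] using h w

variable {m : Type*} [Fintype m] [DecidableEq m]

theorem lift_star_eq_transpose (f : X → Matrix m m R) (p : FreeAlgebra R X) :
    lift R f (star p) = (lift R (fun x => (f x)ᵀ) p)ᵀ := by
  induction p using FreeAlgebra.induction with
  | grade0 r => simp [Matrix.algebraMap_eq_diagonal]
  | grade1 x => simp
  | add a b ha hb => simp [ha, hb]
  | mul a b ha hb => simp [ha, hb]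

theorem lift_star_map_eq_transpose {g : X → X} {f : X → Matrix m m R}
    (hf : ∀ x, f (g x) = (f x)ᵀ) (p : FreeAlgebra R X) :
    lift R f (star (lift R (ι R ∘ g) p)) = (lift R f p)ᵀ := by
  rw [lift_star_eq_transpose, ← AlgHom.comp_apply, ← lift_comp_ι ((lift R _).comp _)]
  congr 2
  ext x
  simp [hf]

end FreeAlgebra

theorem IsSumSq.exists_eq_sum_fin_sq {R : Type*} [CommSemiring R] {s : R} (hs : IsSumSq s) :
    ∃ (m : ℕ) (a : Fin m → R), s = ∑ i, a i ^ 2 := by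
  induction hs with
  | zero => exact ⟨0, Fin.elim0, by simp⟩
  | sq_add a _ ih =>
    obtain ⟨m, b, rfl⟩ := ih
    exact ⟨m + 1, Fin.cons a b, by simp [Fin.sum_univ_succ, sq]⟩

namespace IsFormallyReal

variable {R : Type*} [CommRing R]

theorem of_sum_fin_sq_eq_zero
    (h : ∀ (m : ℕ) (a : Fin m → R), ∑ i, a i ^ 2 = 0 → ∀ i, a i = 0) : IsFormallyReal R :=
  of_eq_zero_of_eq_zero_of_mul_self_add fun {s a} hs has => by
    obtain ⟨m, b, rfl⟩ := hs.exists_eq_sum_fin_sq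
    simpa using h (m + 1) (Fin.cons a b) (by simpa [Fin.sum_univ_succ, sq] using has) 0

theorem eq_zero_of_sum_mul_self_eq_zero [IsFormallyReal R] {ι : Type*} {s : Finset ι}
    {f : ι → R} (h : ∑ i ∈ s, f i * f i = 0) {i : ι} (hi : i ∈ s) : f i = 0 := by
  classical
  rw [← Finset.add_sum_erase s _ hi] at h
  have hsq := eq_zero_of_add_right (IsSumSq.mul_self _) (IsSumSq.sum_mul_self _ _) h
  exact IsReduced.eq_zero _ ⟨2, by rwa [sq]⟩

end IsFormallyReal

theorem Matrix.eq_zero_of_trace_mul_transpose_self_eq_zero {R m k : Type*} [CommRing R]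
    [IsFormallyReal R] [Fintype m] [Fintype k] {M : Matrix m k R} (h : (M * Mᵀ).trace = 0) :
    M = 0 := by
  simp only [trace, diag_apply, mul_apply, transpose_apply] at h
  rw [← Fintype.sum_prod_type'] at h
  ext i j
  exact IsFormallyReal.eq_zero_of_sum_mul_self_eq_zero (f := fun x => M x.1 x.2) h
    (Finset.mem_univ (i, j))

/-- Over a formally real field `F`, if the tuples `(X, Xᵀ)` and `(Y, Yᵀ)` satisfy
the same trace identities for all words, then every noncommutative polynomial
vanishing at `(X, Xᵀ)` also vanishes at `(Y, Yᵀ)`. -/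
theorem trace_words_eq_implies_polynomial_transfer
    (F : Type*) [Field F]
    (hreal : ∀ (m : ℕ) (a : Fin m → F), (∑ i, (a i) ^ 2) = 0 → ∀ i, a i = 0)
    (n d : ℕ) (X Y : Fin d → Matrix (Fin n) (Fin n) F)
    (htr : ∀ w : FreeMonoid (Fin d ⊕ Fin d),
      Matrix.trace (FreeMonoid.lift (Sum.elim X (fun i => (X i)ᵀ)) w) =
      Matrix.trace (FreeMonoid.lift (Sum.elim Y (fun i => (Y i)ᵀ)) w)) :
    ∀ p : FreeAlgebra F (Fin d ⊕ Fin d),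
      FreeAlgebra.lift F (Sum.elim X (fun i => (X i)ᵀ)) p = 0 →
      FreeAlgebra.lift F (Sum.elim Y (fun i => (Y i)ᵀ)) p = 0 := by
  have := IsFormallyReal.of_sum_fin_sq_eq_zero hreal
  intro p hp
  set q := p * star (FreeAlgebra.lift F (FreeAlgebra.ι F ∘ Sum.swap) p)
  have hq (Z : Fin d → Matrix (Fin n) (Fin n) F) :
      FreeAlgebra.lift F (Sum.elim Z (fun i => (Z i)ᵀ)) q =
        FreeAlgebra.lift F (Sum.elim Z (fun i => (Z i)ᵀ)) p *
          (FreeAlgebra.lift F (Sum.elim Z (fun i => (Z i)ᵀ)) p)ᵀ := by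
    rw [map_mul, FreeAlgebra.lift_star_map_eq_transpose]
    rintro (i | i) <;> simp
  have htrace := LinearMap.congr_fun
    (FreeAlgebra.linearMap_comp_lift_eq_of_forall_freeMonoidLift
      (traceLinearMap (Fin n) F F) htr) q
  apply Matrix.eq_zero_of_trace_mul_transpose_self_eq_zero
  simp only [LinearMap.comp_apply, AlgHom.toLinearMap_apply, traceLinearMap_apply] at htrace
  rw [← hq, ← htrace, hq, hp, zero_mul, trace_zero]
end

section
/- Let K be a field, n ≥ 1, and let Z ∈ M_n(K) be invertible. Suppose that Z⁻¹·Xᵀ·Z = (Z⁻¹·X·Z)ᵀ for every X ∈ M_n(K). Then there exists λ ∈ K such that Z·Zᵀ = λ·I_n; moreover λ ≠ 0 and λ is a sum of squares in K. -/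
/-!
Applying the hypothesis to `Xᵀ` and transposing gives `Z⁻¹ X Z = Zᵀ X (Zᵀ)⁻¹`, i.e. `Z Zᵀ`
commutes with every matrix, so it is a scalar matrix `l • 1`. It is invertible, so `l ≠ 0`,
and its `(i, i)` entry exhibits `l` as the sum of the squares of the `i`-th row of `Z`.
-/

open Matrix

namespace Matrix

variable {ι R : Type*} [Fintype ι]

theorem mul_transpose_self_apply_self [Semiring R] (A : Matrix ι ι R) (i : ι) :
    (A * Aᵀ) i i = ∑ j, A i j ^ 2 := by
  simp only [mul_apply, transpose_apply, sq]

variable [DecidableEq ι]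

theorem commute_mul_transpose_of_inv_mul_transpose_mul [CommRing R] {Z : Matrix ι ι R}
    (hZ : IsUnit Z) (h : ∀ X : Matrix ι ι R, Z⁻¹ * Xᵀ * Z = (Z⁻¹ * X * Z)ᵀ)
    (X : Matrix ι ι R) : Commute X (Z * Zᵀ) := by
  have hZt : IsUnit Zᵀ := (isUnit_transpose Z).mpr hZ
  have hconj : Z⁻¹ * X * Z = Zᵀ * X * Zᵀ⁻¹ := by
    simpa only [transpose_transpose, transpose_mul, transpose_nonsing_inv, mul_assoc]
      using h Xᵀ
  calc X * (Z * Zᵀ) = Z * (Z⁻¹ * X * Z) * Zᵀ := by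
        simp only [← mul_assoc, mul_nonsing_inv Z ((isUnit_iff_isUnit_det Z).mp hZ), one_mul]
    _ = Z * Zᵀ * X := by
        rw [hconj]
        simp only [mul_assoc, nonsing_inv_mul Zᵀ ((isUnit_iff_isUnit_det Zᵀ).mp hZt), mul_one]

theorem exists_eq_smul_one_of_forall_commute [CommSemiring R] {M : Matrix ι ι R}
    (hM : ∀ X : Matrix ι ι R, Commute X M) : ∃ r : R, M = r • 1 := by
  obtain ⟨r, rfl⟩ := mem_range_scalar_iff_commute_single'.mpr fun i j => hM _
  exact ⟨r, (smul_one_eq_diagonal r).symm⟩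

theorem ne_zero_of_isUnit_smul_one [Nonempty ι] [CommRing R] [Nontrivial R] {r : R}
    (h : IsUnit (r • (1 : Matrix ι ι R))) : r ≠ 0 := by
  rintro rfl
  exact not_isUnit_zero (zero_smul R (1 : Matrix ι ι R) ▸ h)

end Matrix

/-- If `Z ∈ M_n(K)` is invertible and conjugation by `Z` commutes with
transposition, i.e. `Z⁻¹·Xᵀ·Z = (Z⁻¹·X·Z)ᵀ` for all `X`, then `Z·Zᵀ = λ·I_n`
for some `λ ∈ K` which is nonzero and a sum of squares in `K`. -/
theorem conj_commutes_transpose_implies_ZZt_scalar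
    (K : Type*) [Field K] (n : ℕ) (hn : 0 < n)
    (Z : Matrix (Fin n) (Fin n) K) (hZ : IsUnit Z)
    (h : ∀ X : Matrix (Fin n) (Fin n) K, Z⁻¹ * Xᵀ * Z = (Z⁻¹ * X * Z)ᵀ) :
    ∃ l : K, Z * Zᵀ = l • (1 : Matrix (Fin n) (Fin n) K) ∧ l ≠ 0 ∧
      ∃ (m : ℕ) (a : Fin m → K), l = ∑ i, (a i) ^ 2 := by
  have : Nonempty (Fin n) := Fin.pos_iff_nonempty.mp hn
  obtain ⟨l, hl⟩ := exists_eq_smul_one_of_forall_commute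
    (commute_mul_transpose_of_inv_mul_transpose_mul hZ h)
  have hunit : IsUnit (l • (1 : Matrix (Fin n) (Fin n) K)) :=
    hl ▸ hZ.mul ((isUnit_transpose Z).mpr hZ)
  refine ⟨l, hl, ne_zero_of_isUnit_smul_one hunit, n, Z ⟨0, hn⟩, ?_⟩
  rw [← mul_transpose_self_apply_self, hl, Matrix.smul_apply, one_apply_eq, smul_eq_mul, mul_one]
end

section
/- Let F be an infinite field, K a field extension of F, n, d ≥ 1, and X₁,…,X_d, Y₁,…,Y_d ∈ M_n(F). If there exists an invertible matrix P ∈ M_n(K) such that P·X_i = Y_i·P and P·X_iᵀ = Y_iᵀ·P for all i = 1,…,d, then there exists an invertible matrix P ∈ M_n(F) satisfying P·X_i = Y_i·P and P·X_iᵀ = Y_iᵀ·P for all i = 1,…,d. -/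
/-!
Expanding the entries of a solution `P` over `K` in an `F`-basis of `K`, each coordinate
matrix is a solution over `F`, because the equations have coefficients in `F`. Hence `P` lies in
the `K`-span of the space `V` of solutions over `F`: `P = ∑ gⱼ Qⱼ` for a basis `(Qⱼ)` of `V`.
The polynomial `det (∑ xⱼ Qⱼ) ∈ F[x]` does not vanish at `g`, so it is nonzero, and as `F` is
infinite it does not vanish at some `t ∈ Fᵐ`; then `∑ tⱼ Qⱼ` is an invertible solution over `F`.
-/

open Matrix

namespace Matrix

def intertwiners {R n ι : Type*} [CommSemiring R] [Fintype n] (Z W : ι → Matrix n n R) :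
    Submodule R (Matrix n n R) where
  carrier := {Q | ∀ i, Q * Z i = W i * Q}
  add_mem' ha hb i := by rw [add_mul, mul_add, ha i, hb i]
  zero_mem' i := by rw [zero_mul, mul_zero]
  smul_mem' r Q hQ i := by rw [smul_mul, Matrix.mul_smul, hQ i]

section Coefficients

variable {R A : Type*} [CommSemiring R] [Semiring A] [Algebra R A] {l m n : Type*} [Fintype m]

theorem map_linearMap_mul_map_algebraMap (f : A →ₗ[R] R) (P : Matrix l m A) (Z : Matrix m n R) :
    (P * Z.map (algebraMap R A)).map f = P.map f * Z := by
  ext a c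
  simp only [map_apply, mul_apply, map_sum]
  refine Finset.sum_congr rfl fun k _ => ?_
  rw [← Algebra.commutes, ← Algebra.smul_def, map_smul, smul_eq_mul, mul_comm]

theorem map_linearMap_map_algebraMap_mul (f : A →ₗ[R] R) (Z : Matrix l m R) (P : Matrix m n A) :
    (Z.map (algebraMap R A) * P).map f = Z * P.map f := by
  ext a c
  simp only [map_apply, mul_apply, map_sum]
  refine Finset.sum_congr rfl fun k _ => ?_
  rw [← Algebra.smul_def, map_smul, smul_eq_mul]

theorem map_linearMap_mem_intertwiners {ι : Type*} {Z W : ι → Matrix m m R} {P : Matrix m m A}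
    (hP : ∀ i, P * (Z i).map (algebraMap R A) = (W i).map (algebraMap R A) * P)
    (f : A →ₗ[R] R) : P.map f ∈ intertwiners Z W := fun i => by
  rw [← map_linearMap_mul_map_algebraMap, hP i, map_linearMap_map_algebraMap_mul]

theorem mem_span_range_map_coord [Fintype n] {ι : Type*} (b : Module.Basis ι R A)
    (P : Matrix m n A) :
    P ∈ Submodule.span A (Set.range fun α => (P.map (b.coord α)).map (algebraMap R A)) := by
  classical
  let s := Finset.univ.biUnion fun p : m × n => (b.repr (P p.1 p.2)).support
  have hP : P = ∑ α ∈ s, b α • (P.map (b.coord α)).map (algebraMap R A) := by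
    ext a c
    have hsupp : (b.repr (P a c)).support ⊆ s := fun α hα =>
      Finset.mem_biUnion.2 ⟨(a, c), Finset.mem_univ _, hα⟩
    conv_lhs => rw [← b.linearCombination_repr (P a c), Finsupp.linearCombination_apply,
      Finsupp.sum_of_support_subset _ hsupp _ (by simp)]
    simp [sum_apply, Algebra.smul_def, Algebra.commutes]
  -- keeps `rw [hP]` from also rewriting the `P` inside the spanning set
  set S := Set.range fun α => (P.map (b.coord α)).map (algebraMap R A)
  rw [hP]
  refine Submodule.sum_mem _ fun α _ => Submodule.smul_mem _ _ ?_
  exact Submodule.subset_span ⟨α, rfl⟩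

end Coefficients

variable {n : Type*} [Fintype n] [DecidableEq n]

section PencilDet

variable {R ι : Type*} [CommRing R] [Fintype ι]

noncomputable def pencilDet (M : ι → Matrix n n R) : MvPolynomial ι R :=
  (∑ j, (MvPolynomial.X j : MvPolynomial ι R) • (M j).map MvPolynomial.C).det

theorem aeval_pencilDet {S : Type*} [CommRing S] [Algebra R S] (M : ι → Matrix n n R)
    (g : ι → S) :
    MvPolynomial.aeval g (pencilDet M) = (∑ j, g j • (M j).map (algebraMap R S)).det := by
  rw [pencilDet, AlgHom.map_det]
  congr 1
  ext a c
  simp [sum_apply]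

theorem eval_pencilDet (M : ι → Matrix n n R) (t : ι → R) :
    MvPolynomial.eval t (pencilDet M) = (∑ j, t j • M j).det := by
  simpa using aeval_pencilDet M t

end PencilDet

variable {F K : Type*} [Field F] [Infinite F] [CommRing K] [Nontrivial K] [Algebra F K]

theorem exists_isUnit_sum_smul_of_isUnit_sum_smul_map {ι : Type*} [Fintype ι]
    (M : ι → Matrix n n F) {g : ι → K} (hg : IsUnit (∑ j, g j • (M j).map (algebraMap F K))) :
    ∃ t : ι → F, IsUnit (∑ j, t j • M j) := by
  have hdet : pencilDet M ≠ 0 := by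
    intro h0
    have := (isUnit_iff_isUnit_det _).1 hg
    rw [← aeval_pencilDet, h0, map_zero] at this
    exact not_isUnit_zero this
  obtain ⟨t, ht⟩ : ∃ t, MvPolynomial.eval t (pencilDet M) ≠ 0 := by
    by_contra! h
    exact hdet (MvPolynomial.funext fun t => by simp [h t])
  rw [eval_pencilDet] at ht
  exact ⟨t, (isUnit_iff_isUnit_det _).2 ht.isUnit⟩

theorem exists_isUnit_mem_of_isUnit_mem_span_map (V : Submodule F (Matrix n n F))
    {P : Matrix n n K} (hP : P ∈ Submodule.span K ((map · (algebraMap F K)) '' V))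
    (hPu : IsUnit P) : ∃ Q ∈ V, IsUnit Q := by
  let e := Module.finBasis F V
  have hspan : (map · (algebraMap F K)) '' V ⊆
      (Submodule.span K (Set.range fun j => (e j : Matrix n n F).map (algebraMap F K)) :
        Set (Matrix n n K)) := by
    rintro _ ⟨Q, hQ, rfl⟩
    obtain ⟨c, rfl⟩ : ∃ c : Fin _ → F, ∑ j, c j • (e j : Matrix n n F) = Q :=
      ⟨e.repr ⟨Q, hQ⟩, by
        simpa only [Submodule.coe_sum, Submodule.coe_smul] using
          congrArg Subtype.val (e.sum_repr ⟨Q, hQ⟩)⟩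
    refine (Submodule.mem_span_range_iff_exists_fun K).2 ⟨fun j => algebraMap F K (c j), ?_⟩
    ext a b
    simp only [sum_apply, smul_apply, map_apply, map_sum, smul_eq_mul, map_mul]
  obtain ⟨g, hg⟩ := (Submodule.mem_span_range_iff_exists_fun K).1 (Submodule.span_le.2 hspan hP)
  obtain ⟨t, ht⟩ := exists_isUnit_sum_smul_of_isUnit_sum_smul_map _ (hg ▸ hPu)
  exact ⟨_, Submodule.sum_mem _ fun j _ => V.smul_mem (t j) (e j).2, ht⟩

theorem exists_isUnit_mem_intertwiners_of_isUnit_map {ι : Type*} (Z W : ι → Matrix n n F)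
    {P : Matrix n n K} (hPu : IsUnit P)
    (hP : ∀ i, P * (Z i).map (algebraMap F K) = (W i).map (algebraMap F K) * P) :
    ∃ Q ∈ intertwiners Z W, IsUnit Q := by
  let b := Module.Basis.ofVectorSpace F K
  refine exists_isUnit_mem_of_isUnit_mem_span_map _
    (Submodule.span_mono ?_ (mem_span_range_map_coord b P)) hPu
  rintro _ ⟨α, rfl⟩
  exact ⟨_, map_linearMap_mem_intertwiners hP (b.coord α), rfl⟩

end Matrix

theorem simultaneous_similarity_descends_general
    (F K : Type*) [Field F] [Infinite F] [Field K] [Algebra F K]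
    (n d : ℕ)
    (X Y : Fin d → Matrix (Fin n) (Fin n) F)
    (hK : ∃ P : Matrix (Fin n) (Fin n) K, IsUnit P ∧
      ∀ i, P * (algebraMap F K).mapMatrix (X i) = (algebraMap F K).mapMatrix (Y i) * P ∧
        P * ((algebraMap F K).mapMatrix (X i))ᵀ = ((algebraMap F K).mapMatrix (Y i))ᵀ * P) :
    ∃ P : Matrix (Fin n) (Fin n) F, IsUnit P ∧
      ∀ i, P * X i = Y i * P ∧ P * (X i)ᵀ = (Y i)ᵀ * P := by
  obtain ⟨P, hPu, hP⟩ := hK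
  obtain ⟨Q, hQ, hQu⟩ := exists_isUnit_mem_intertwiners_of_isUnit_map
    (Sum.elim X fun i => (X i)ᵀ) (Sum.elim Y fun i => (Y i)ᵀ) hPu (by
      rintro (i | i)
      · exact (hP i).1
      · simpa only [RingHom.mapMatrix_apply, Sum.elim_inr, transpose_map] using (hP i).2)
  exact ⟨Q, hQu, fun i => ⟨hQ (.inl i), hQ (.inr i)⟩⟩

/-- Descent of simultaneous similarity (respecting transposes): if two tuples of
matrices over an infinite field `F` are intertwined by an invertible matrix over
a field extension `K` of `F`, then they are intertwined by an invertible matrix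
over `F` itself. -/
theorem simultaneous_similarity_descends
    (F K : Type*) [Field F] [Infinite F] [Field K] [Algebra F K]
    (n d : ℕ) (hn : 0 < n) (hd : 0 < d)
    (X Y : Fin d → Matrix (Fin n) (Fin n) F)
    (hK : ∃ P : Matrix (Fin n) (Fin n) K, IsUnit P ∧
      ∀ i, P * (algebraMap F K).mapMatrix (X i) = (algebraMap F K).mapMatrix (Y i) * P ∧
        P * ((algebraMap F K).mapMatrix (X i))ᵀ = ((algebraMap F K).mapMatrix (Y i))ᵀ * P) :
    ∃ P : Matrix (Fin n) (Fin n) F, IsUnit P ∧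
      ∀ i, P * X i = Y i * P ∧ P * (X i)ᵀ = (Y i)ᵀ * P :=
  simultaneous_similarity_descends_general F K n d X Y hK
end

section
/- Let n, d ≥ 1 and X₁,…,X_d, Y₁,…,Y_d ∈ M_n(ℝ). Suppose there exists an invertible matrix P ∈ M_n(ℝ) such that P⁻¹·X_i·P = Y_i and P⁻¹·X_iᵀ·P = Y_iᵀ for all i = 1,…,d. Then there exists an orthogonal matrix O ∈ M_n(ℝ) (i.e. O·Oᵀ = I_n) such that Oᵀ·X_i·O = Y_i for all i = 1,…,d. -/
/-!
With `A = PᵀP`, the two similarity conditions say `X P = P Y` and (transposed) `Pᵀ X = Y Pᵀ`, hence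
`A Y = Pᵀ X P = Y A`: every `Yᵢ` commutes with `A`, hence with `√A`. The orthogonal factor
`O = P (√A)⁻¹` of the polar decomposition of `P` then satisfies
`Oᵀ X O = (√A)⁻¹ A Y (√A)⁻¹ = √A Y (√A)⁻¹ = Y`.
-/

open Matrix
open scoped MatrixOrder

namespace Matrix

variable {ι : Type*} [Fintype ι]

lemma commute_transpose_mul_self_of_intertwines {R : Type*} [CommSemiring R]
    {P X Y : Matrix ι ι R} (hX : X * P = P * Y) (hXt : Pᵀ * X = Y * Pᵀ) :
    Commute (Pᵀ * P) Y :=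
  calc Pᵀ * P * Y = Pᵀ * X * P := by rw [mul_assoc, ← hX, mul_assoc]
    _ = Y * (Pᵀ * P) := by rw [hXt, mul_assoc]

lemma posSemidef_transpose_mul_self (P : Matrix ι ι ℝ) : (Pᵀ * P).PosSemidef := by
  simpa only [conjTranspose_eq_transpose_of_trivial] using posSemidef_conjTranspose_mul_self P

variable [DecidableEq ι]

lemma inv_mul_mul_eq_iff_mul_eq_mul {R : Type*} [CommRing R] {P X Y : Matrix ι ι R}
    (hP : IsUnit P) : P⁻¹ * X * P = Y ↔ X * P = P * Y := by
  have := hP.invertible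
  rw [mul_assoc, inv_mul_eq_iff_eq_mul_of_invertible]

lemma transpose_cfcSqrt (A : Matrix ι ι ℝ) : (CFC.sqrt A)ᵀ = CFC.sqrt A :=
  (CFC.sqrt_nonneg A).posSemidef.isHermitian

lemma isUnit_det_cfcSqrt_transpose_mul_self {P : Matrix ι ι ℝ} (hP : IsUnit P) :
    IsUnit (CFC.sqrt (Pᵀ * P)).det := by
  rw [← isUnit_iff_isUnit_det,
    CFC.isUnit_sqrt_iff _ (posSemidef_transpose_mul_self P).nonneg]
  exact ((isUnit_transpose P).mpr hP).mul hP

noncomputable def orthogonalPolarFactor (P : Matrix ι ι ℝ) : Matrix ι ι ℝ :=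
  P * (CFC.sqrt (Pᵀ * P))⁻¹

lemma transpose_orthogonalPolarFactor {P : Matrix ι ι ℝ} :
    (orthogonalPolarFactor P)ᵀ = (CFC.sqrt (Pᵀ * P))⁻¹ * Pᵀ := by
  rw [orthogonalPolarFactor, transpose_mul, transpose_nonsing_inv, transpose_cfcSqrt]

lemma orthogonalPolarFactor_mem_orthogonalGroup {P : Matrix ι ι ℝ} (hP : IsUnit P) :
    orthogonalPolarFactor P ∈ orthogonalGroup ι ℝ := by
  set S := CFC.sqrt (Pᵀ * P)
  have hS := isUnit_det_cfcSqrt_transpose_mul_self hP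
  rw [mem_orthogonalGroup_iff', transpose_orthogonalPolarFactor, orthogonalPolarFactor]
  calc S⁻¹ * Pᵀ * (P * S⁻¹) = S⁻¹ * (S * S) * S⁻¹ := by
        rw [CFC.sqrt_mul_sqrt_self _ (posSemidef_transpose_mul_self P).nonneg]
        simp only [mul_assoc]
    _ = 1 := by rw [nonsing_inv_mul_cancel_left _ _ hS, mul_nonsing_inv _ hS]

lemma transpose_orthogonalPolarFactor_mul_mul {P X Y : Matrix ι ι ℝ} (hP : IsUnit P)
    (hX : X * P = P * Y) (hXt : Pᵀ * X = Y * Pᵀ) :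
    (orthogonalPolarFactor P)ᵀ * X * orthogonalPolarFactor P = Y := by
  have hSY : Commute (CFC.sqrt (Pᵀ * P)) Y := by
    rw [CFC.sqrt_eq_cfc]
    exact (commute_transpose_mul_self_of_intertwines hX hXt).cfc_nnreal _
  set S := CFC.sqrt (Pᵀ * P)
  have hS := isUnit_det_cfcSqrt_transpose_mul_self hP
  have hPXP : Pᵀ * X * P = S * S * Y := by
    rw [CFC.sqrt_mul_sqrt_self _ (posSemidef_transpose_mul_self P).nonneg, mul_assoc, hX,
      mul_assoc]
  rw [transpose_orthogonalPolarFactor, orthogonalPolarFactor]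
  calc S⁻¹ * Pᵀ * X * (P * S⁻¹) = S⁻¹ * (S * (S * Y)) * S⁻¹ := by
        rw [← mul_assoc S S Y, ← hPXP]
        simp only [mul_assoc]
    _ = S⁻¹ * (S * (Y * S)) * S⁻¹ := by rw [hSY.eq]
    _ = Y := by
        rw [nonsing_inv_mul_cancel_left _ _ hS, mul_nonsing_inv_cancel_right _ _ hS]

end Matrix

theorem similar_with_transposes_implies_orthogonally_similar_general
    (n d : ℕ)
    (X Y : Fin d → Matrix (Fin n) (Fin n) ℝ)
    (hP : ∃ P : Matrix (Fin n) (Fin n) ℝ, IsUnit P ∧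
      ∀ i, P⁻¹ * X i * P = Y i ∧ P⁻¹ * (X i)ᵀ * P = (Y i)ᵀ) :
    ∃ O : Matrix (Fin n) (Fin n) ℝ, O * Oᵀ = 1 ∧ ∀ i, Oᵀ * X i * O = Y i := by
  obtain ⟨P, hP, hXY⟩ := hP
  refine ⟨orthogonalPolarFactor P,
    (mem_orthogonalGroup_iff _ _).mp (orthogonalPolarFactor_mem_orthogonalGroup hP),
    fun i ↦ transpose_orthogonalPolarFactor_mul_mul hP
      ((inv_mul_mul_eq_iff_mul_eq_mul hP).mp (hXY i).1) ?_⟩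
  have hXt := congrArg transpose ((inv_mul_mul_eq_iff_mul_eq_mul hP).mp (hXY i).2)
  simpa only [transpose_mul, transpose_transpose] using hXt

/-- If two tuples of real matrices are simultaneously similar by an invertible
matrix compatibly with transposes, then they are simultaneously orthogonally
similar. -/
theorem similar_with_transposes_implies_orthogonally_similar
    (n d : ℕ) (hn : 0 < n) (hd : 0 < d)
    (X Y : Fin d → Matrix (Fin n) (Fin n) ℝ)
    (hP : ∃ P : Matrix (Fin n) (Fin n) ℝ, IsUnit P ∧
      ∀ i, P⁻¹ * X i * P = Y i ∧ P⁻¹ * (X i)ᵀ * P = (Y i)ᵀ) :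
    ∃ O : Matrix (Fin n) (Fin n) ℝ, O * Oᵀ = 1 ∧ ∀ i, Oᵀ * X i * O = Y i :=
  similar_with_transposes_implies_orthogonally_similar_general n d X Y hP
end

section
/- Let F be a field, n ≥ 1, and let S be a subsemigroup of the multiplicative semigroup of M_n(F) which is a group, i.e. there exists E ∈ S with E·X = X·E = X for all X ∈ S, and for every X ∈ S there exists Y ∈ S with X·Y = Y·X = E. Then there exist m ≤ n and an injective group homomorphism from S (with this group structure) into the general linear group GL_m(F). -/
/-!
The identity `E` of `S` is an idempotent matrix and every `X ∈ S` satisfies `E X = X E = X`,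
so `S` lies in the corner ring `E M_n(F) E`, whose unit is `E`; there the inverses in `S`
make `S` a subgroup of the units. The corner acts faithfully on the column space `V` of `E`
(as `X = X E`, a matrix of the corner is determined by its values on `V`), with `E` acting as
the identity, so its units embed into `GL(V) ≅ GL_m(F)` with `m = dim V ≤ n`.
-/

open Matrix

namespace MulHom

variable {S M : Type*} [Mul S] [Monoid M]

/-- The semigroup version of `IsUnit.liftRight`. -/
noncomputable def liftRight (f : S →ₙ* M) (hf : ∀ x, IsUnit (f x)) : S →ₙ* Mˣ where
  toFun x := (hf x).unit
  map_mul' x y := Units.ext (by simp)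

theorem liftRight_injective {f : S →ₙ* M} (hf : ∀ x, IsUnit (f x)) (hinj : Function.Injective f) :
    Function.Injective (f.liftRight hf) :=
  fun _ _ h ↦ hinj (congrArg Units.val h)

end MulHom

namespace Subsemigroup

variable {A : Type*} [Semiring A] {e : A} (he : IsIdempotentElem e) (S : Subsemigroup A)
  (hid : ∀ x ∈ S, e * x = x ∧ x * e = x)

def toCorner : S →ₙ* he.Corner where
  toFun x := ⟨x, (mem_corner_iff he).2 (hid x x.2)⟩
  map_mul' _ _ := rfl

theorem toCorner_injective : Function.Injective (S.toCorner he hid) :=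
  fun _ _ h ↦ Subtype.ext (congrArg Subtype.val h :)

theorem isUnit_toCorner (hinv : ∀ x ∈ S, ∃ y ∈ S, x * y = e ∧ y * x = e) (x : S) :
    IsUnit (S.toCorner he hid x) := by
  obtain ⟨y, hy, hxy, hyx⟩ := hinv x x.2
  exact isUnit_iff_exists.2 ⟨S.toCorner he hid ⟨y, hy⟩, Subtype.ext hxy, Subtype.ext hyx⟩

variable (hinv : ∀ x ∈ S, ∃ y ∈ S, x * y = e ∧ y * x = e)

noncomputable def toUnitsCorner : S →ₙ* he.Cornerˣ :=
  (S.toCorner he hid).liftRight (S.isUnit_toCorner he hid hinv)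

theorem toUnitsCorner_injective : Function.Injective (S.toUnitsCorner he hid hinv) :=
  MulHom.liftRight_injective _ (S.toCorner_injective he hid)

end Subsemigroup

theorem MonoidHom.apply_mem_range_of_mul_eq {A R M : Type*} [Monoid A] [Semiring R]
    [AddCommMonoid M] [Module R M] (ρ : A →* Module.End R M) {e x : A} (hx : e * x = x) (v : M) :
    ρ x v ∈ LinearMap.range (ρ e) :=
  ⟨ρ x v, by rw [← Module.End.mul_apply, ← map_mul, hx]⟩

namespace IsIdempotentElem

variable {A R M : Type*} [Semiring A] [Semiring R] [AddCommMonoid M] [Module R M] {e : A}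
  (he : IsIdempotentElem e) (ρ : A →* Module.End R M)

def cornerRestrict : he.Corner →* Module.End R (LinearMap.range (ρ e)) where
  toFun x := (ρ x.1).restrict
    fun v _ ↦ ρ.apply_mem_range_of_mul_eq ((Subsemigroup.mem_corner_iff he).1 x.2).1 v
  map_one' := by
    ext ⟨_, v, rfl⟩
    simp [show (1 : he.Corner).1 = e from rfl, ← Module.End.mul_apply, ← map_mul, he.eq]
  map_mul' x y := by
    ext v
    simp [show (x * y).1 = x.1 * y.1 from rfl]

theorem cornerRestrict_injective (hρ : Function.Injective ρ) :
    Function.Injective (he.cornerRestrict ρ) := by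
  intro x y h
  have hx := ((Subsemigroup.mem_corner_iff he).1 x.2).2
  have hy := ((Subsemigroup.mem_corner_iff he).1 y.2).2
  refine Subtype.ext (hρ (LinearMap.ext fun v ↦ ?_))
  have hv := congr(($h ⟨ρ e v, v, rfl⟩ : M))
  calc ρ x.1 v = ρ x.1 (ρ e v) := by rw [← Module.End.mul_apply, ← map_mul, hx]
    _ = ρ y.1 (ρ e v) := hv
    _ = ρ y.1 v := by rw [← Module.End.mul_apply, ← map_mul, hy]

end IsIdempotentElem

open Module in
/-- A subsemigroup `S` of `M_n(F)` which is a group (with some identity `E ∈ S`,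
not necessarily `I_n`) embeds, as a group, into `GL_m(F)` for some `m ≤ n`. -/
theorem subsemigroup_group_embeds_in_GL
    (F : Type*) [Field F] (n : ℕ)
    (S : Subsemigroup (Matrix (Fin n) (Fin n) F))
    (E : Matrix (Fin n) (Fin n) F) (hE : E ∈ S)
    (hid : ∀ X ∈ S, E * X = X ∧ X * E = X)
    (hinv : ∀ X ∈ S, ∃ Y ∈ S, X * Y = E ∧ Y * X = E) :
    ∃ m : ℕ, m ≤ n ∧ ∃ f : S → GL (Fin m) F,
      Function.Injective f ∧ ∀ a b : S, f (a * b) = f a * f b := by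
  have hE_idem : IsIdempotentElem E := (hid E hE).1
  let ρ : Matrix (Fin n) (Fin n) F →* Module.End F (Fin n → F) := toLinAlgEquiv'.toMonoidHom
  let V := LinearMap.range (ρ E)
  let toGL := (GeneralLinearGroup.toLin' (finBasis F V)).symm
  let f : S →ₙ* GL (Fin (finrank F V)) F :=
    (toGL.toMonoidHom.comp (Units.map (hE_idem.cornerRestrict ρ))).toMulHom.comp
      (S.toUnitsCorner hE_idem hid hinv)
  refine ⟨finrank F V, V.finrank_le.trans (finrank_fin_fun F).le, f, ?_, map_mul f⟩
  exact toGL.injective.comp <|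
    (Units.map_injective (hE_idem.cornerRestrict_injective ρ toLinAlgEquiv'.injective)).comp
      (S.toUnitsCorner_injective hE_idem hid hinv)
end

section
/- Let F be a field and n, d, m, k ∈ ℕ, and let s₁,…,s_m and t₁,…,t_k be elements of the free group on d generators. Suppose that for every finite group G and every map g from the d generators to G: if the image of each s_j under the induced homomorphism FreeGroup (Fin d) → G equals 1, then the image of some t_i equals 1. Then the same holds in GL_n(F): for every map g from the d generators to GL_n(F), if each s_j maps to the identity under the induced homomorphism, then some t_i maps to the identity. (In other words, every universal sentence of group theory true in all finite groups is true in GL_n(F), hence in every linear group.) -/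
open Matrix

/-!
Malcev's argument. The entries of the `g i` and of their inverses generate a finitely generated
`ℤ`-algebra `R ⊆ F`, and the tuple already lives in `GL_n(R)`. Since `ℤ` is a Jacobson ring, every
nonzero element of `R` lies outside some maximal ideal `I`, and `R ⧸ I` is a field of finite type
over `ℤ`, hence finite. Reducing modulo such ideals shows that `GL_n(R)` is residually finite, so
the finitely many nontrivial values of the words `t i` survive together in one finite quotient,
where the hypothesis applies.
-/

instance : IsJacobsonRing ℤ := by
  refine isJacobsonRing_iff_prime_eq.mpr fun P hP => ?_
  rcases eq_or_ne P ⊥ with rfl | hP0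
  · refine le_antisymm (fun x hx => ?_) Ideal.le_jacobson
    rw [Ideal.mem_bot]
    rcases Int.isUnit_iff.mp (Ideal.mem_jacobson_bot.mp hx x) with h | h <;> nlinarith
  · have := hP.isMaximal hP0
    exact Ideal.jacobson_eq_self_of_isMaximal

theorem finite_of_isField_of_finiteType_int {K : Type*} [CommRing K] [Algebra.FiniteType ℤ K]
    (hK : IsField K) : Finite K := by
  let := hK.toField
  have : Module.Finite ℤ K := finite_of_finite_type_of_isJacobsonRing ℤ K
  obtain ⟨p, hp⟩ := CharP.exists K
  rcases eq_or_ne p 0 with rfl | hp0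
  · have : CharZero K := CharP.charP_to_charZero K
    exact (Int.not_isField (isField_of_isIntegral_of_isField Int.cast_injective hK)).elim
  · refine Module.finite_of_fg_torsion K fun x =>
      ⟨⟨p, mem_nonZeroDivisors_of_ne_zero (by exact_mod_cast hp0)⟩, ?_⟩
    simp

theorem Ideal.finite_quotient_of_finiteType_int {R : Type*} [CommRing R] [Algebra.FiniteType ℤ R]
    (I : Ideal R) [I.IsMaximal] : Finite (R ⧸ I) :=
  -- `R ⧸ I` carries the quotient `ℤ`-algebra structure, equal to `algebraInt` only up to unfolding
  have hft : Algebra.FiniteType ℤ (R ⧸ I) := inferInstance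
  @finite_of_isField_of_finiteType_int _ _ hft
    ((Ideal.Quotient.maximal_ideal_iff_isField_quotient I).mp ‹_›)

theorem Ideal.exists_isMaximal_notMem_of_ne_zero {R : Type*} [CommRing R] [IsJacobsonRing R]
    [IsReduced R] {a : R} (ha : a ≠ 0) : ∃ I : Ideal R, I.IsMaximal ∧ a ∉ I := by
  have : a ∉ (⊥ : Ideal R).jacobson := by
    rwa [IsJacobsonRing.out ‹_› Ideal.isRadical_bot, Ideal.mem_bot]
  simpa [Ideal.jacobson, Ideal.mem_sInf] using this

theorem Units.exists_map_eq_of_mem_mrange {M N : Type*} [Monoid M] [Monoid N] {f : M →* N}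
    (hf : Function.Injective f) {u : Nˣ} (hu : (u : N) ∈ MonoidHom.mrange f)
    (hu' : ((u⁻¹ : Nˣ) : N) ∈ MonoidHom.mrange f) : ∃ v : Mˣ, Units.map f v = u := by
  obtain ⟨a, ha⟩ := hu
  obtain ⟨b, hb⟩ := hu'
  exact ⟨⟨a, b, hf (by simp [ha, hb]), hf (by simp [ha, hb])⟩, Units.ext ha⟩

theorem FreeGroup.lift_comp_apply {α G H : Type*} [Group G] [Group H] (f : G →* H) (g : α → G)
    (w : FreeGroup α) : FreeGroup.lift (f ∘ g) w = f (FreeGroup.lift g w) :=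
  (FreeGroup.lift_unique (f.comp (FreeGroup.lift g)) fun _ => by simp).symm

namespace Group.ResiduallyFinite

variable {G : Type*} [Group G] [ResiduallyFinite G]

theorem exists_finite_monoidHom_ne_one {ι : Type*} [Finite ι] (x : ι → G) (hx : ∀ i, x i ≠ 1) :
    ∃ (Q : Type) (_ : Group Q) (_ : Finite Q) (f : G →* Q), ∀ i, f (x i) ≠ 1 := by
  choose N hN using fun i => exists_finiteIndexNormalSubgroup_notMem (x i) (hx i)
  let P := ∀ i, G ⧸ (N i).toSubgroup
  refine ⟨Shrink.{0} P, inferInstance, inferInstance,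
    Shrink.mulEquiv.symm.toMonoidHom.comp (MonoidHom.pi fun i => QuotientGroup.mk' _),
    fun i h => hN i ?_⟩
  simp only [MulEquiv.toMonoidHom_eq_coe, MonoidHom.coe_comp, MonoidHom.coe_coe,
    Function.comp_apply, EmbeddingLike.map_eq_one_iff] at h
  simpa [QuotientGroup.eq_one_iff, FiniteIndexNormalSubgroup.mem_toSubgroup_iff] using congrFun h i

theorem exists_lift_eq_one_of_forall_finite {α ι κ : Type*} [Finite κ]
    {s : ι → FreeGroup α} {t : κ → FreeGroup α}
    (hfin : ∀ (Q : Type) [Group Q] [Finite Q] (g : α → Q),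
      (∀ j, FreeGroup.lift g (s j) = 1) → ∃ i, FreeGroup.lift g (t i) = 1)
    (g : α → G) (hs : ∀ j, FreeGroup.lift g (s j) = 1) : ∃ i, FreeGroup.lift g (t i) = 1 := by
  by_contra! ht
  obtain ⟨Q, _, _, f, hf⟩ := exists_finite_monoidHom_ne_one _ ht
  obtain ⟨i, hi⟩ := hfin Q (f ∘ g) fun j => by rw [FreeGroup.lift_comp_apply, hs j, map_one]
  exact hf i (by rwa [FreeGroup.lift_comp_apply] at hi)

end Group.ResiduallyFinite

namespace Matrix.GeneralLinearGroup

variable {n : Type*} [Fintype n] [DecidableEq n]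

theorem map_injective {R S : Type*} [CommRing R] [CommRing S] {f : R →+* S}
    (hf : Function.Injective f) : Function.Injective (map (n := n) f) :=
  fun _ _ h => Units.ext (Matrix.map_injective hf (congrArg Units.val h))

instance residuallyFinite {R : Type*} [CommRing R] [IsReduced R] [Algebra.FiniteType ℤ R] :
    Group.ResiduallyFinite (GL n R) := by
  refine Group.residuallyFinite_of_forall_exists_finite_monoidHom fun M hM => ?_
  obtain ⟨p, q, hpq⟩ : ∃ p q, (M : Matrix n n R) p q - (1 : Matrix n n R) p q ≠ 0 := by
    by_contra! h
    exact hM (ext fun p q => sub_eq_zero.mp (h p q))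
  have : IsJacobsonRing R := isJacobsonRing_of_finiteType (A := ℤ)
  obtain ⟨I, hI, hpqI⟩ := Ideal.exists_isMaximal_notMem_of_ne_zero hpq
  have := I.finite_quotient_of_finiteType_int
  refine ⟨GL n (R ⧸ I), inferInstance, inferInstance, map (Ideal.Quotient.mk I),
    fun h => hpqI ?_⟩
  have hentry := (ext_iff _ _).mp h p q
  rw [GeneralLinearGroup.map_apply] at hentry
  rw [← Ideal.Quotient.eq_zero_iff_mem, map_sub, sub_eq_zero, hentry]
  simp [Matrix.one_apply, apply_ite]

theorem exists_finiteType_subalgebra_map_comp_eq {F ι : Type*} [CommRing F] [Finite ι]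
    (g : ι → GL n F) : ∃ R : Subalgebra ℤ F, Algebra.FiniteType ℤ R ∧
      ∃ h : ι → GL n R, map (R.val : R →+* F) ∘ h = g := by
  let entries : Set F := ⋃ i, (Set.range fun pq : n × n => (g i : Matrix n n F) pq.1 pq.2) ∪
    Set.range fun pq : n × n => ((g i)⁻¹ : GL n F) pq.1 pq.2
  let R := Algebra.adjoin ℤ entries
  have hfin : entries.Finite :=
    Set.finite_iUnion fun i => (Set.finite_range _).union (Set.finite_range _)
  let f : Matrix n n R →* Matrix n n F := (R.val : R →+* F).mapMatrix.toMonoidHom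
  have hf : Function.Injective f := Matrix.map_injective Subtype.val_injective
  have hrange (M : Matrix n n F) (hM : ∀ p q, M p q ∈ entries) : M ∈ MonoidHom.mrange f :=
    ⟨fun p q => ⟨M p q, Algebra.subset_adjoin (hM p q)⟩, rfl⟩
  choose h hh using fun i => Units.exists_map_eq_of_mem_mrange hf
    (hrange _ fun p q => Set.mem_iUnion.mpr ⟨i, .inl ⟨(p, q), rfl⟩⟩)
    (hrange _ fun p q => Set.mem_iUnion.mpr ⟨i, .inr ⟨(p, q), rfl⟩⟩)
  exact ⟨R, .adjoin_of_finite hfin, h, funext hh⟩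

end Matrix.GeneralLinearGroup

/-- Every universal sentence of group theory that holds in all finite groups
holds in `GL_n(F)`: if, in every finite group, whenever all the words `s j`
evaluate to `1`, some word `t i` evaluates to `1`, then the same implication
holds in `GL_n(F)`. -/
theorem GL_models_universal_theory_of_finite_groups
    (F : Type*) [Field F] (n d m k : ℕ)
    (s : Fin m → FreeGroup (Fin d)) (t : Fin k → FreeGroup (Fin d))
    (hfin : ∀ (G : Type) [Group G] [Finite G] (g : Fin d → G),
      (∀ j, FreeGroup.lift g (s j) = 1) → ∃ i, FreeGroup.lift g (t i) = 1) :
    ∀ g : Fin d → GL (Fin n) F,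
      (∀ j, FreeGroup.lift g (s j) = 1) → ∃ i, FreeGroup.lift g (t i) = 1 := by
  intro g hs
  obtain ⟨R, _, h, rfl⟩ := GeneralLinearGroup.exists_finiteType_subalgebra_map_comp_eq g
  have hinj := GeneralLinearGroup.map_injective (n := Fin n) (f := (R.val : R →+* F))
    Subtype.val_injective
  simp only [FreeGroup.lift_comp_apply, map_eq_one_iff _ hinj] at hs ⊢
  exact Group.ResiduallyFinite.exists_lift_eq_one_of_forall_finite hfin h hs
end

section
/- Let X₁ = diag(1,2,2) and X₂ = diag(1,1,2) be diagonal matrices in M₃(ℚ). Then there do not exist a field Ω and unital ring homomorphisms ε, δ : M₃(ℚ) → M₃(Ω) such that ε(X₁) = δ(X₂). (In particular, the inclusion of the subring generated by X₁ and the homomorphism sending X₁ to X₂ cannot be amalgamated into any matrix ring M₃(Ω).) -/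
/-!
A unital ring homomorphism `φ : Mₙ(R) → End_K(V)` sends the diagonal matrix units `Eᵢᵢ` to
complete orthogonal idempotents, so `V` splits as the direct sum of the ranges of the `φ Eᵢᵢ`.
These ranges all have the same dimension, since `Eᵢᵢ = Eᵢⱼ Eⱼⱼ Eⱼᵢ`; hence each is `dim V / n`,
and `φ (∑ᵢ∈s Eᵢᵢ)` has rank `#s · dim V / n`. Since `X₁ - 1` is a sum of two diagonal matrix
units and `X₂ - 1` is a single one, `ε X₁ = δ X₂` would make an idempotent of rank 2 in `M₃(Ω)`
equal to one of rank 1.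
-/

open Module Matrix
open LinearMap (range)

section Idempotents

variable {R M : Type*} [Semiring R] [AddCommMonoid M] [Module R M]

theorem IsIdempotentElem.range_add_eq_sup {f g : Module.End R M} (hf : IsIdempotentElem f)
    (hg : IsIdempotentElem g) (hfg : f * g = 0) (hgf : g * f = 0) :
    range (f + g) = range f ⊔ range g := by
  refine le_antisymm (LinearMap.range_add_le f g) (sup_le ?_ ?_)
  · calc range f = range ((f + g) * f) := by rw [add_mul, hf.eq, hgf, add_zero]
      _ ≤ range (f + g) := LinearMap.range_comp_le_range _ _
  · calc range g = range ((f + g) * g) := by rw [add_mul, hg.eq, hfg, zero_add]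
      _ ≤ range (f + g) := LinearMap.range_comp_le_range _ _

theorem IsIdempotentElem.disjoint_range_of_mul_eq_zero {f g : Module.End R M}
    (hf : IsIdempotentElem f) (hfg : f * g = 0) : Disjoint (range f) (range g) := by
  rw [Submodule.disjoint_def]
  rintro _ hx ⟨y, rfl⟩
  rw [← (LinearMap.IsIdempotentElem.mem_range_iff hf).mp hx]
  exact LinearMap.congr_fun hfg y

end Idempotents

section FiniteDimensional

variable {K V : Type*} [Field K] [AddCommGroup V] [Module K V] [FiniteDimensional K V]

theorem LinearMap.finrank_range_mul_mul_le (f g h : Module.End K V) :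
    finrank K (range (f * g * h)) ≤ finrank K (range g) :=
  calc finrank K (range (f * g * h)) = finrank K ((range (g * h)).map f) := by
        rw [mul_assoc, Module.End.mul_eq_comp, LinearMap.range_comp]
    _ ≤ finrank K (range (g * h)) := Submodule.finrank_map_le _ _
    _ ≤ finrank K (range g) := Submodule.finrank_mono (LinearMap.range_comp_le_range h g)

theorem IsIdempotentElem.finrank_range_add {f g : Module.End K V} (hf : IsIdempotentElem f)
    (hg : IsIdempotentElem g) (hfg : f * g = 0) (hgf : g * f = 0) :
    finrank K (range (f + g)) = finrank K (range f) + finrank K (range g) := by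
  rw [hf.range_add_eq_sup hg hfg hgf, ← Submodule.finrank_sup_add_finrank_inf_eq,
    (hf.disjoint_range_of_mul_eq_zero hfg).eq_bot, finrank_bot, add_zero]

theorem OrthogonalIdempotents.finrank_range_sum {ι : Type*} {e : ι → Module.End K V}
    (he : OrthogonalIdempotents e) (s : Finset ι) :
    finrank K (range (∑ i ∈ s, e i)) = ∑ i ∈ s, finrank K (range (e i)) := by
  classical
  induction s using Finset.induction_on with
  | empty => rw [Finset.sum_empty, Finset.sum_empty, LinearMap.range_zero, finrank_bot]
  | insert i s hi ih =>
    have hsum_mul : (∑ j ∈ s, e j) * e i = 0 := by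
      rw [Finset.sum_mul]
      exact Finset.sum_eq_zero fun j hj ↦ he.ortho (ne_of_mem_of_not_mem hj hi)
    rw [Finset.sum_insert hi, Finset.sum_insert hi, ← ih]
    exact (he.idem i).finrank_range_add he.isIdempotentElem_sum (he.mul_sum_of_notMem hi)
      hsum_mul

theorem CompleteOrthogonalIdempotents.sum_finrank_range {ι : Type*} [Fintype ι]
    {e : ι → Module.End K V} (he : CompleteOrthogonalIdempotents e) :
    ∑ i, finrank K (range (e i)) = finrank K V := by
  rw [← he.finrank_range_sum, he.complete, Module.End.one_eq_id, LinearMap.range_id, finrank_top]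

end FiniteDimensional

namespace Matrix

variable {n R : Type*} [Fintype n] [DecidableEq n] [Semiring R]

theorem completeOrthogonalIdempotents_single :
    CompleteOrthogonalIdempotents (fun i : n ↦ single i i (1 : R)) where
  idem i := by simp [IsIdempotentElem, single_mul_single_same]
  ortho i j hij := single_mul_single_of_ne 1 i i j hij 1
  complete := sum_single_one

variable {K V : Type*} [Field K] [AddCommGroup V] [Module K V] [FiniteDimensional K V]
  (φ : Matrix n n R →+* Module.End K V)

theorem finrank_range_map_single_le (i j : n) :
    finrank K (range (φ (single i i 1))) ≤ finrank K (range (φ (single j j 1))) := by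
  have hfactor : single i i (1 : R) = single i j 1 * single j j 1 * single j i 1 := by
    simp [single_mul_single_same]
  rw [hfactor, map_mul, map_mul]
  exact LinearMap.finrank_range_mul_mul_le _ _ _

theorem card_mul_finrank_range_map_single (i : n) :
    Fintype.card n * finrank K (range (φ (single i i 1))) = finrank K V := by
  rw [← (completeOrthogonalIdempotents_single.map φ).sum_finrank_range]
  calc Fintype.card n * finrank K (range (φ (single i i 1)))
      = ∑ _j : n, finrank K (range (φ (single i i 1))) := by simp
    _ = ∑ j, finrank K (range (φ (single j j 1))) := Finset.sum_congr rfl fun j _ ↦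
        le_antisymm (finrank_range_map_single_le φ i j) (finrank_range_map_single_le φ j i)

theorem card_mul_finrank_range_map_sum_single (s : Finset n) :
    Fintype.card n * finrank K (range (φ (∑ i ∈ s, single i i 1))) = s.card * finrank K V := by
  have hsum := (completeOrthogonalIdempotents_single.map φ).finrank_range_sum s
  simp only [Function.comp_apply] at hsum
  rw [map_sum, hsum, Finset.mul_sum]
  simp only [card_mul_finrank_range_map_single, Finset.sum_const, smul_eq_mul]

end Matrix

/-- The diagonal matrices `X₁ = diag(1,2,2)` and `X₂ = diag(1,1,2)` in `M₃(ℚ)`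
cannot be amalgamated: there is no field `Ω` with unital ring homomorphisms
`ε, δ : M₃(ℚ) → M₃(Ω)` such that `ε X₁ = δ X₂`. -/
theorem no_amalgamation_diagonal_matrices :
    ¬ ∃ (Ω : Type) (_ : Field Ω)
        (ε δ : Matrix (Fin 3) (Fin 3) ℚ →+* Matrix (Fin 3) (Fin 3) Ω),
      ε (Matrix.diagonal ![1, 2, 2]) = δ (Matrix.diagonal ![1, 1, 2]) := by
  rintro ⟨Ω, _, ε, δ, h⟩
  have hX₁ : (diagonal ![1, 2, 2] : Matrix (Fin 3) (Fin 3) ℚ) =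
      1 + ∑ i ∈ {1, 2}, single i i 1 := by
    ext i j; fin_cases i <;> fin_cases j <;> simp [one_apply, one_add_one_eq_two]
  have hX₂ : (diagonal ![1, 1, 2] : Matrix (Fin 3) (Fin 3) ℚ) =
      1 + ∑ i ∈ {2}, single i i 1 := by
    ext i j; fin_cases i <;> fin_cases j <;> simp [one_apply, one_add_one_eq_two]
  let toEnd : Matrix (Fin 3) (Fin 3) Ω →+* Module.End Ω (Fin 3 → Ω) := toLinAlgEquiv'.toRingHom
  have hεδ : toEnd.comp ε (∑ i ∈ {1, 2}, single i i 1) =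
      toEnd.comp δ (∑ i ∈ {2}, single i i 1) := by
    simpa [hX₁, hX₂] using congrArg toEnd h
  have h₁ := card_mul_finrank_range_map_sum_single (toEnd.comp ε) {1, 2}
  have h₂ := card_mul_finrank_range_map_sum_single (toEnd.comp δ) {2}
  rw [hεδ, h₂] at h₁
  simp at h₁
end

section
/- Let X₁ = E₁₂ + E₃₄ and X₂ = E₁₂ in M₄(ℚ), where E_{ij} denotes the standard matrix unit. Then there do not exist a field Ω and unital ring homomorphisms ε, δ : M₄(ℚ) → M₄(Ω) such that ε(X₁) = δ(X₂). (In particular, the inclusion of the subring generated by X₁ and the homomorphism sending X₁ to X₂ cannot be amalgamated into any matrix ring M₄(Ω).) -/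
open Matrix

/-!
Under a unital ring homomorphism `φ : M₄(ℚ) → M₄(Ω)` the matrix units `E_ii` go to pairwise
conjugate idempotents summing to `1`, so each `φ(E_ii)` has trace `1`. As `Ω` has characteristic
zero (`φ` embeds `ℚ`), the trace of an idempotent is its rank, so `φ(E_ii)` has rank `1`.
Now `δ(X₂) = δ(E₁₁) δ(E₁₂)` has rank at most `1`, whereas
`ε(X₁) ε(E₂₁ + E₄₃) = ε(E₁₁ + E₃₃)` has rank `2`.
-/

namespace Matrix

variable {n m K : Type*} [Fintype n] [DecidableEq n] [Fintype m] [DecidableEq m]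

theorem trace_eq_rank_of_isIdempotentElem [Field K] {A : Matrix n n K} (hA : IsIdempotentElem A) :
    A.trace = A.rank :=
  (trace_toLin'_eq A).symm.trans
    (LinearMap.IsIdempotentElem.isProj_range _
      (hA.map (toLinAlgEquiv' : Matrix n n K ≃ₐ[K] _))).trace

theorem rank_eq_of_isIdempotentElem_of_trace_eq [Field K] [CharZero K] {A : Matrix n n K}
    (hA : IsIdempotentElem A) {r : ℕ} (h : A.trace = r) : A.rank = r :=
  Nat.cast_injective ((trace_eq_rank_of_isIdempotentElem hA).symm.trans h)

theorem charZero_of_ringHom [Field K] [CharZero K] [Nonempty m] {Ω : Type*} [Field Ω]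
    (φ : Matrix n n K →+* Matrix m m Ω) : CharZero Ω :=
  have : CharZero (Matrix m m Ω) :=
    charZero_of_injective_ringHom (φ.comp (algebraMap K (Matrix n n K))).injective
  (scalar m : Ω →+* Matrix m m Ω).charZero

section MatrixUnits

variable {R : Type*} [Semiring R]

theorem trace_map_single_one_eq {S : Type*} [CommRing S] (φ : Matrix n n R →+* Matrix m m S)
    (i j : n) : (φ (single i i 1)).trace = (φ (single j j 1)).trace := by
  have hi : single i i (1 : R) = single i j 1 * single j i 1 := by simp
  have hj : single j j (1 : R) = single j i 1 * single i j 1 := by simp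
  rw [hi, hj, map_mul, map_mul, trace_mul_comm]

theorem card_mul_trace_map_single_one {S : Type*} [CommRing S]
    (φ : Matrix n n R →+* Matrix m m S) (i : n) :
    Fintype.card n * (φ (single i i 1)).trace = Fintype.card m := by
  have h := congrArg (fun A => (φ A).trace) (sum_single_one (m := n) (α := R))
  simpa only [map_sum, trace_sum, trace_map_single_one_eq φ _ i, Finset.sum_const,
    Finset.card_univ, nsmul_eq_mul, map_one, trace_one] using h

theorem trace_map_single_one_eq_one {S : Type*} [CommRing S] [IsDomain S] [CharZero S]
    (φ : Matrix n n R →+* Matrix n n S) (i : n) : (φ (single i i 1)).trace = 1 :=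
  mul_left_cancel₀ (Nat.cast_ne_zero.2 (Fintype.card_pos_iff.2 ⟨i⟩).ne') <|
    (card_mul_trace_map_single_one φ i).trans (mul_one _).symm

theorem rank_map_single_one_eq_one {Ω : Type*} [Field Ω] [CharZero Ω]
    (φ : Matrix n n R →+* Matrix n n Ω) (i : n) : (φ (single i i 1)).rank = 1 := by
  refine rank_eq_of_isIdempotentElem_of_trace_eq ?_ (by simpa using trace_map_single_one_eq_one φ i)
  rw [IsIdempotentElem, ← map_mul, single_mul_single_same, mul_one]

end MatrixUnits

end Matrix

/-- The nilpotent matrices `X₁ = E₁₂ + E₃₄` and `X₂ = E₁₂` in `M₄(ℚ)` cannot be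
amalgamated: there is no field `Ω` with unital ring homomorphisms
`ε, δ : M₄(ℚ) → M₄(Ω)` such that `ε X₁ = δ X₂`. -/
theorem no_amalgamation_nilpotent_matrices :
    ¬ ∃ (Ω : Type) (_ : Field Ω)
        (ε δ : Matrix (Fin 4) (Fin 4) ℚ →+* Matrix (Fin 4) (Fin 4) Ω),
      ε (Matrix.single 0 1 (1 : ℚ) + Matrix.single 2 3 (1 : ℚ)) =
        δ (Matrix.single 0 1 (1 : ℚ)) := by
  rintro ⟨Ω, _, ε, δ, hεδ⟩
  have : CharZero Ω := charZero_of_ringHom δ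
  have hX₂ : (δ (single 0 1 1)).rank ≤ 1 := calc
    (δ (single 0 1 1)).rank = (δ (single 0 0 1) * δ (single 0 1 1)).rank := by
      rw [← map_mul, single_mul_single_same, mul_one]
    _ ≤ (δ (single 0 0 1)).rank := rank_mul_le_left _ _
    _ = 1 := rank_map_single_one_eq_one δ 0
  have hP : (ε (single 0 0 1 + single 2 2 1)).rank = 2 := by
    refine rank_eq_of_isIdempotentElem_of_trace_eq ?_ ?_
    · simp [IsIdempotentElem, ← map_mul, add_mul, mul_add]
    · rw [map_add, trace_add, trace_map_single_one_eq_one, trace_map_single_one_eq_one]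
      norm_num
  have hfactor : ε (single 0 0 1 + single 2 2 1) =
      δ (single 0 1 1) * ε (single 1 0 1 + single 3 2 1) := by
    rw [← hεδ, ← map_mul]
    simp [add_mul, mul_add]
  have hle := hfactor ▸ rank_mul_le_left (δ (single 0 1 1)) (ε (single 1 0 1 + single 3 2 1))
  omega
end
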